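/- arXiv:1407.5807 — 4 statements merged into one kernel-verified Lean document; each statement's English description precedes it below -/
import Mathlib

section
/- Let m be a positive integer, let K̄ be a real symmetric positive semidefinite m×m matrix whose diagonal entries all equal λ > 0, let σ² > 0, and let 0 ≤ α ≤ λ. If k ∈ ℝᵐ is a vector all of whose entries satisfy k_h ≥ λ − α, then λ − kᵀ(K̄ + σ²·I)⁻¹ k ≤ λ − m(λ − α)²/(mλ + σ²). -/
/-!
Write `A = K̄ + σ²I`. Cauchy–Schwarz for the inner product `⟪u, v⟫ = uᵀAv`, applied to the all-ones
vector `𝟙` and `A⁻¹k`, gives `(𝟙ᵀk)² ≤ (𝟙ᵀA𝟙)(kᵀA⁻¹k)`. The entries of `k` bound `𝟙ᵀk` below by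
`m(λ - α)`, and since the `2 × 2` minors of `K̄` are nonnegative, its entries are at most `λ`, so
`𝟙ᵀA𝟙 ≤ m(mλ + σ²)`.
-/

open Matrix

namespace Matrix

variable {n : Type*} [Fintype n]

theorem PosSemidef.dotProduct_mulVec_sq_le {M : Matrix n n ℝ} (hM : M.PosSemidef) (x y : n → ℝ) :
    (x ⬝ᵥ M *ᵥ y) ^ 2 ≤ (x ⬝ᵥ M *ᵥ x) * (y ⬝ᵥ M *ᵥ y) := by
  let := M.toSeminormedAddCommGroup hM
  let := M.toInnerProductSpace hM
  have hinner : ∀ u v : n → ℝ, inner ℝ u v = u ⬝ᵥ M *ᵥ v := fun u v => dotProduct_comm _ _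
  simpa only [sq, hinner] using real_inner_mul_inner_self_le x y

theorem PosSemidef.apply_sq_le_mul_diag {M : Matrix n n ℝ} (hM : M.PosSemidef) (i j : n) :
    M i j ^ 2 ≤ M i i * M j j := by
  classical
  simpa [mulVec_single, dotProduct_single] using
    hM.dotProduct_mulVec_sq_le (Pi.single i 1) (Pi.single j 1)

theorem PosSemidef.apply_le_of_diag_eq {M : Matrix n n ℝ} (hM : M.PosSemidef) {c : ℝ}
    (hdiag : ∀ i, M i i = c) (i j : n) : M i j ≤ c := by
  have hc : 0 ≤ c := hdiag i ▸ hM.diag_nonneg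
  refine (abs_le_of_sq_le_sq' ?_ hc).2
  simpa [hdiag, sq] using hM.apply_sq_le_mul_diag i j

theorem PosDef.dotProduct_sq_div_le [DecidableEq n] {A : Matrix n n ℝ} (hA : A.PosDef)
    {x : n → ℝ} (hx : x ≠ 0) (y : n → ℝ) :
    (x ⬝ᵥ y) ^ 2 / (x ⬝ᵥ A *ᵥ x) ≤ y ⬝ᵥ A⁻¹ *ᵥ y := by
  have hAy : A *ᵥ (A⁻¹ *ᵥ y) = y := by
    rw [mulVec_mulVec, mul_nonsing_inv _ ((isUnit_iff_isUnit_det A).mp hA.isUnit), one_mulVec]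
  have hy : y ⬝ᵥ A⁻¹ *ᵥ y = A⁻¹ *ᵥ y ⬝ᵥ A *ᵥ (A⁻¹ *ᵥ y) := by
    rw [hAy, dotProduct_comm]
  rw [div_le_iff₀ (by simpa using hA.dotProduct_mulVec_pos hx), hy, mul_comm]
  simpa [hAy] using hA.posSemidef.dotProduct_mulVec_sq_le x (A⁻¹ *ᵥ y)

theorem one_dotProduct_add_smul_one_mulVec_one_le [DecidableEq n] {K : Matrix n n ℝ}
    (hK : K.PosSemidef) {c : ℝ} (hdiag : ∀ i, K i i = c) (s : ℝ) :
    1 ⬝ᵥ (K + s • 1) *ᵥ 1 ≤ Fintype.card n * (Fintype.card n * c + s) := by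
  have hsum : ∑ i, ∑ j, K i j ≤ ∑ _i : n, ∑ _j : n, c :=
    Finset.sum_le_sum fun i _ => Finset.sum_le_sum fun j _ => hK.apply_le_of_diag_eq hdiag i j
  simp only [Finset.sum_const, Finset.card_univ, nsmul_eq_mul] at hsum
  have hK1 : 1 ⬝ᵥ K *ᵥ 1 = ∑ i, ∑ j, K i j := by simp [mulVec, dotProduct]
  rw [add_mulVec, dotProduct_add, smul_mulVec, one_mulVec, dotProduct_smul, one_dotProduct_one,
    hK1, smul_eq_mul]
  linarith

end Matrix

theorem stmt_1_general (m : ℕ) (hm : 0 < m) (lam : ℝ)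
    (Kbar : Matrix (Fin m) (Fin m) ℝ) (hK : Kbar.PosSemidef)
    (hdiag : ∀ i, Kbar i i = lam)
    (σ2 : ℝ) (hσ2 : 0 < σ2)
    (α : ℝ) (hαlam : α ≤ lam)
    (k : Fin m → ℝ) (hk : ∀ h, lam - α ≤ k h) :
    lam - k ⬝ᵥ ((Kbar + σ2 • (1 : Matrix (Fin m) (Fin m) ℝ))⁻¹ *ᵥ k) ≤
      lam - (m : ℝ) * (lam - α) ^ 2 / ((m : ℝ) * lam + σ2) := by
  set A := Kbar + σ2 • (1 : Matrix (Fin m) (Fin m) ℝ)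
  have hA : A.PosDef := PosDef.posSemidef_add hK (PosDef.one.smul hσ2)
  have hone : (1 : Fin m → ℝ) ≠ 0 := by
    have : Nonempty (Fin m) := ⟨⟨0, hm⟩⟩
    exact one_ne_zero
  have hsum : (m : ℝ) * (lam - α) ≤ 1 ⬝ᵥ k := by
    rw [one_dotProduct]
    calc (m : ℝ) * (lam - α) = ∑ _i : Fin m, (lam - α) := by simp [mul_sub]
      _ ≤ ∑ i, k i := Finset.sum_le_sum fun i _ => hk i
  have hm0 : (m : ℝ) ≠ 0 := by positivity
  apply sub_le_sub_left
  calc (m : ℝ) * (lam - α) ^ 2 / (m * lam + σ2)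
      = (m * (lam - α)) ^ 2 / (m * (m * lam + σ2)) := by field_simp
    _ ≤ (1 ⬝ᵥ k) ^ 2 / (1 ⬝ᵥ A *ᵥ 1) := by
      refine div_le_div₀ (sq_nonneg _) ?_ ?_ ?_
      · exact pow_le_pow_left₀ (mul_nonneg m.cast_nonneg (sub_nonneg.mpr hαlam)) hsum 2
      · simpa using hA.dotProduct_mulVec_pos hone
      · simpa using one_dotProduct_add_smul_one_mulVec_one_le hK hdiag σ2
    _ ≤ k ⬝ᵥ A⁻¹ *ᵥ k := hA.dotProduct_sq_div_le hone k

/-- For a real symmetric positive semidefinite `m × m` matrix `K̄` with constant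
diagonal `λ > 0`, noise `σ² > 0`, `0 ≤ α ≤ λ`, and a vector `k` with all entries `≥ λ - α`,
the posterior variance satisfies
`λ - kᵀ(K̄ + σ²·I)⁻¹ k ≤ λ - m(λ - α)² / (mλ + σ²)`. -/
theorem stmt_1 (m : ℕ) (hm : 0 < m) (lam : ℝ) (hlam : 0 < lam)
    (Kbar : Matrix (Fin m) (Fin m) ℝ) (hK : Kbar.PosSemidef)
    (hdiag : ∀ i, Kbar i i = lam)
    (σ2 : ℝ) (hσ2 : 0 < σ2)
    (α : ℝ) (hα0 : 0 ≤ α) (hαlam : α ≤ lam)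
    (k : Fin m → ℝ) (hk : ∀ h, lam - α ≤ k h) :
    lam - k ⬝ᵥ ((Kbar + σ2 • (1 : Matrix (Fin m) (Fin m) ℝ))⁻¹ *ᵥ k) ≤
      lam - (m : ℝ) * (lam - α) ^ 2 / ((m : ℝ) * lam + σ2) :=
  stmt_1_general m hm lam Kbar hK hdiag σ2 hσ2 α hαlam k hk
end

section
/- Let (Ω, F, P) be a probability space with filtration (F_k)_{k≥0}, let (X_k)_{k≥1} be a sequence of random variables with values in a measurable space S such that X_k is F_k-measurable, and let D ⊆ S be measurable. Suppose there exists c ∈ (0,1] such that for every k ≥ 0, P(X_{k+1} ∈ D | F_k) ≥ c almost surely. Then for every m ∈ ℕ and every δ ∈ (0,1) there exists t₀ ∈ ℕ such that for all t ≥ t₀, the probability that at least m of the variables X_1, …, X_t lie in D is at least 1 − δ. -/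
/-!
Integrating the conditional-probability bound over an `ℱ k`-measurable event `A` gives
`P(A ∩ {X_{k+1} ∉ D}) ≤ (1 - c) P(A)`, so by induction all of `X_{a+1}, …, X_{a+L}` miss `D` with
probability at most `(1 - c)^L`. Choose `L` with `m (1 - c)^L ≤ δ` and cut `1, …, m L` into `m`
blocks of length `L`: fewer than `m` hits forces some block to be missed entirely, and a union
bound over the blocks finishes the proof.
-/

open MeasureTheory Finset

theorem Finset.le_card_filter_Icc_of_forall_exists_mem_Ioc {p : ℕ → Prop} [DecidablePred p]
    {m L t : ℕ} (hmt : m * L ≤ t) (h : ∀ i < m, ∃ k ∈ Ioc (i * L) (i * L + L), p k) :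
    m ≤ #{k ∈ Icc 1 t | p k} := by
  choose! f hf_mem hf_p using h
  have hf_Ioc : ∀ i < m, i * L < f i ∧ f i ≤ (i + 1) * L := fun i hi ↦ by
    simpa [add_mul] using hf_mem i hi
  have hf_mono : StrictMonoOn f (range m : Set ℕ) := by
    intro i hi j hj hij
    have hi := hf_Ioc i (mem_range.mp hi)
    have hj := hf_Ioc j (mem_range.mp hj)
    have : (i + 1) * L ≤ j * L := Nat.mul_le_mul_right L hij
    omega
  have hf_maps : ∀ i ∈ range m, f i ∈ ({k ∈ Icc 1 t | p k} : Finset ℕ) := by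
    intro i hi
    have hfi := hf_Ioc i (mem_range.mp hi)
    have : (i + 1) * L ≤ m * L := Nat.mul_le_mul_right L (mem_range.mp hi)
    simp only [mem_filter, mem_Icc]
    exact ⟨⟨by omega, by omega⟩, hf_p i (mem_range.mp hi)⟩
  simpa using card_le_card_of_injOn f hf_maps hf_mono.injOn

section ConditionalHitting

variable {Ω : Type*} {mΩ : MeasurableSpace Ω} {μ : Measure Ω} {c : ℝ}

theorem measureReal_sdiff_le_of_le_condExp_indicator [IsFiniteMeasure μ] {m : MeasurableSpace Ω}
    (hm : m ≤ mΩ) {A B : Set Ω} (hA : MeasurableSet[m] A) (hB : MeasurableSet[mΩ] B)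
    (hc : ∀ᵐ ω ∂μ, c ≤ μ[B.indicator (fun _ ↦ (1 : ℝ)) | m] ω) :
    μ.real (A \ B) ≤ (1 - c) * μ.real A := by
  have hhit : c * μ.real A ≤ μ.real (A ∩ B) := calc
    c * μ.real A = ∫ _ in A, c ∂μ := by rw [setIntegral_const, smul_eq_mul, mul_comm]
    _ ≤ ∫ ω in A, μ[B.indicator (fun _ ↦ (1 : ℝ)) | m] ω ∂μ :=
      setIntegral_mono_ae (integrableOn_const (measure_ne_top _ _))
        integrable_condExp.integrableOn hc
    _ = ∫ ω in A, B.indicator (fun _ ↦ (1 : ℝ)) ω ∂μ :=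
      setIntegral_condExp hm ((integrable_const 1).indicator hB) hA
    _ = μ.real (A ∩ B) :=
      (integral_indicator_one hB).trans (by rw [measureReal_restrict_apply hB, Set.inter_comm])
  have hsplit := measureReal_inter_add_sdiff (μ := μ) (s := A) hB
  linarith

theorem measureReal_biInter_Ioc_compl_le_pow [IsProbabilityMeasure μ] (ℱ : Filtration ℕ mΩ)
    (E : ℕ → Set Ω) (hE : ∀ k, MeasurableSet[ℱ (k + 1)] (E (k + 1))) (hc1 : c ≤ 1)
    (hcond : ∀ k, ∀ᵐ ω ∂μ, c ≤ μ[(E (k + 1)).indicator (fun _ ↦ (1 : ℝ)) | ℱ k] ω) (a L : ℕ) :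
    μ.real (⋂ k ∈ Ioc a (a + L), (E k)ᶜ) ≤ (1 - c) ^ L := by
  induction L with
  | zero => simp
  | succ L ih =>
    have hmeas : MeasurableSet[ℱ (a + L)] (⋂ k ∈ Ioc a (a + L), (E k)ᶜ) := by
      refine measurableSet_biInter _ fun k hk ↦ ?_
      obtain ⟨hak, hkL⟩ := mem_Ioc.mp hk
      obtain ⟨j, rfl⟩ := Nat.exists_eq_add_one_of_ne_zero (by omega : k ≠ 0)
      exact ℱ.mono hkL _ (hE j).compl
    rw [← add_assoc, ← insert_Ioc_right_eq_Ioc_add_one (by omega), set_biInter_insert,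
      Set.inter_comm, ← Set.sdiff_eq, pow_succ']
    calc _ ≤ (1 - c) * μ.real (⋂ k ∈ Ioc a (a + L), (E k)ᶜ) :=
          measureReal_sdiff_le_of_le_condExp_indicator (ℱ.le _) hmeas (ℱ.le _ _ (hE (a + L)))
            (hcond _)
      _ ≤ (1 - c) * (1 - c) ^ L := by gcongr

end ConditionalHitting

/-- If an adapted process `(X_k)` satisfies `P(X_{k+1} ∈ D | F_k) ≥ c` almost
surely for every `k`, with `c ∈ (0,1]`, then for every `m ∈ ℕ` and every `δ ∈ (0,1)` there
exists `t₀` such that for all `t ≥ t₀`, with probability at least `1 - δ` at least `m` of the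
variables `X_1, …, X_t` lie in `D`. -/
theorem stmt_4 {Ω S : Type*} [mΩ : MeasurableSpace Ω] [MeasurableSpace S]
    (P : Measure Ω) [IsProbabilityMeasure P]
    (ℱ : Filtration ℕ mΩ) (X : ℕ → Ω → S)
    (hX : ∀ k, 1 ≤ k → Measurable[ℱ k] (X k))
    (D : Set S) (hD : MeasurableSet D)
    (c : ℝ) (hc0 : 0 < c) (hc1 : c ≤ 1)
    (hcond : ∀ k : ℕ, ∀ᵐ ω ∂P,
      c ≤ (P[(X (k + 1) ⁻¹' D).indicator (fun _ => (1 : ℝ)) | ℱ k]) ω) :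
    ∀ (m : ℕ) (δ : ℝ), 0 < δ → δ < 1 →
      ∃ t₀ : ℕ, ∀ t ≥ t₀,
        1 - ENNReal.ofReal δ ≤
          P {ω | m ≤ ∑ k ∈ Finset.Icc 1 t, D.indicator (fun _ => (1 : ℕ)) (X k ω)} := by
  classical
  intro m δ hδ0 _
  obtain ⟨L, hL⟩ : ∃ L : ℕ, m * (1 - c) ^ L ≤ δ := by
    have := (tendsto_pow_atTop_nhds_zero_of_lt_one (r := 1 - c) (by linarith)
      (by linarith)).const_mul (m : ℝ)
    rw [mul_zero] at this
    exact (this.eventually (ge_mem_nhds hδ0)).exists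
  refine ⟨m * L, fun t ht ↦ ?_⟩
  have hcover : {ω | m ≤ ∑ k ∈ Icc 1 t, D.indicator (fun _ ↦ 1) (X k ω)}ᶜ ⊆
      ⋃ i ∈ range m, ⋂ k ∈ Ioc (i * L) (i * L + L), (X k ⁻¹' D)ᶜ := by
    intro ω hω
    by_contra hmiss
    simp only [Set.mem_iUnion, Set.mem_iInter, Set.mem_compl_iff, Set.mem_preimage, mem_range,
      exists_prop, not_exists, not_and, not_forall, not_not] at hmiss
    refine hω ?_
    simpa only [Set.mem_ofPred_eq, Set.indicator_apply, ← card_filter] using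
      le_card_filter_Icc_of_forall_exists_mem_Ioc ht hmiss
  have hblock (i : ℕ) : P (⋂ k ∈ Ioc (i * L) (i * L + L), (X k ⁻¹' D)ᶜ) ≤
      ENNReal.ofReal ((1 - c) ^ L) := by
    rw [← ofReal_measureReal]
    exact ENNReal.ofReal_le_ofReal <| measureReal_biInter_Ioc_compl_le_pow ℱ _
      (fun k ↦ hX (k + 1) (by omega) hD) hc1 hcond _ _
  have hmiss : P {ω | m ≤ ∑ k ∈ Icc 1 t, D.indicator (fun _ ↦ 1) (X k ω)}ᶜ ≤ ENNReal.ofReal δ :=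
    calc _ ≤ ∑ i ∈ range m, P (⋂ k ∈ Ioc (i * L) (i * L + L), (X k ⁻¹' D)ᶜ) :=
          (measure_mono hcover).trans (measure_biUnion_finset_le _ _)
      _ ≤ m * ENNReal.ofReal ((1 - c) ^ L) := (sum_le_sum fun i _ ↦ hblock i).trans_eq (by simp)
      _ ≤ ENNReal.ofReal δ := by
        rw [← ENNReal.ofReal_natCast, ← ENNReal.ofReal_mul (by positivity)]
        exact ENNReal.ofReal_le_ofReal hL
  rw [tsub_le_iff_right, ← measure_univ (μ := P)]
  exact (measure_univ_le_add_compl _).trans (by gcongr)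
end

section
/- Let X ⊂ ℝ² be compact and convex with nonempty interior, and let K : X × X → ℝ be a continuous, symmetric, positive semidefinite kernel (every Gram matrix built from K is positive semidefinite) with K(x,x) = λ > 0 for all x ∈ X. Let (Ω, F, P) be a probability space with filtration (F_k)_{k≥0} and let (x_k)_{k≥1} be an X-valued adapted process such that there exists ε̄ > 0 with P(x_{k+1} ∈ A | F_k) ≥ ε̄·vol(A) almost surely for every Borel set A ⊆ X, where vol is the Lebesgue measure on ℝ². Fix σ² > 0 and for t ∈ ℕ and x ∈ X define the posterior variance V_t(x) = λ − k_t(x)ᵀ(K̄_t + σ²·I_t)⁻¹ k_t(x), where (K̄_t)_{ij} = K(x_i, x_j) for 1 ≤ i,j ≤ t and (k_t(x))_i = K(x_i, x). Then for every ε > 0 and every δ ∈ (0,1] there exists t₀ such that for all t ≥ t₀, P( sup_{x ∈ X} V_t(x) ≤ ε ) ≥ 1 − δ. -/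
/-!
Testing the variational formula `k ⬝ M⁻¹ k = max_a (2 a ⬝ k - a ⬝ M a)`, for `M = K̄_t + σ² I`,
against the uniform average of `m` data sites lying in a ball around `q` on which
`|K u v - λ| ≤ η` gives `V_t(q) ≤ 3η + σ²/m`. Cover `X` by finitely many such balls; each meets
`X` in a set of positive volume (convexity and nonempty interior), so at every step the process
enters it with conditional probability at least some `p > 0`. Cutting the first `m n` steps into
`m` blocks of length `n`, some block misses some ball with probability at most
`Σ_balls m (1 - p)^n`, which is below `δ` for large `n`; outside this event every ball holds `m`
sites, hence `sup V_t ≤ ε`.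
-/

open MeasureTheory Filter Matrix

/-- The plane `ℝ²`. -/
abbrev E2 : Type := EuclideanSpace ℝ (Fin 2)

open Metric

namespace Matrix

variable {ι : Type*} [Fintype ι] [DecidableEq ι]

theorem two_mul_dotProduct_sub_le_dotProduct_inv_mulVec {M : Matrix ι ι ℝ} (hM : M.PosDef)
    (k a : ι → ℝ) : 2 * (a ⬝ᵥ k) - a ⬝ᵥ (M *ᵥ a) ≤ k ⬝ᵥ (M⁻¹ *ᵥ k) := by
  set w := M⁻¹ *ᵥ k
  have hMw : M *ᵥ w = k := by
    rw [mulVec_mulVec, mul_nonsing_inv M ((isUnit_iff_isUnit_det M).1 hM.isUnit), one_mulVec]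
  have hwa : w ⬝ᵥ (M *ᵥ a) = a ⬝ᵥ k := by
    rw [dotProduct_mulVec, ← mulVec_transpose, ← conjTranspose_eq_transpose_of_trivial,
      hM.isHermitian.eq, hMw, dotProduct_comm]
  have hsq : 0 ≤ (a - w) ⬝ᵥ (M *ᵥ (a - w)) := by
    simpa using hM.posSemidef.dotProduct_mulVec_nonneg (a - w)
  simp only [mulVec_sub, dotProduct_sub, sub_dotProduct, hMw, hwa] at hsq
  linarith [dotProduct_comm a k, dotProduct_comm k w]

theorem ite_mem_dotProduct (s : Finset ι) (c : ℝ) (v : ι → ℝ) :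
    (fun i => if i ∈ s then c else 0) ⬝ᵥ v = c * ∑ i ∈ s, v i := by
  simp [dotProduct, ite_mul, Finset.sum_ite_mem, Finset.mul_sum]

end Matrix

section PosteriorVariance

variable {ι E : Type*}

def kernelMatrix (K : E → E → ℝ) (y : ι → E) : Matrix ι ι ℝ :=
  Matrix.of fun i j => K (y i) (y j)

noncomputable def posteriorVariance [Fintype ι] [DecidableEq ι] (K : E → E → ℝ) (lam σ2 : ℝ)
    (y : ι → E) (q : E) : ℝ :=
  lam - (fun i => K (y i) q) ⬝ᵥ
    ((kernelMatrix K y + σ2 • (1 : Matrix ι ι ℝ))⁻¹ *ᵥ fun i => K (y i) q)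

theorem posSemidef_kernelMatrix {K : E → E → ℝ} (hKsymm : ∀ a b, K a b = K b a)
    (hKpsd : ∀ (n : ℕ) (v : Fin n → E) (a : Fin n → ℝ),
      0 ≤ ∑ i, ∑ j, a i * a j * K (v i) (v j)) {n : ℕ} (y : Fin n → E) :
    (kernelMatrix K y).PosSemidef := by
  refine .of_dotProduct_mulVec_nonneg (funext₂ fun i j => hKsymm (y j) (y i)) fun a => ?_
  refine (hKpsd n y a).trans_eq ?_
  simp only [star_trivial, dotProduct, mulVec, kernelMatrix, of_apply, Finset.mul_sum]
  exact Finset.sum_congr rfl fun i _ => Finset.sum_congr rfl fun j _ => by ring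

theorem posteriorVariance_le [Fintype ι] [DecidableEq ι] {K : E → E → ℝ} {lam σ2 η : ℝ}
    {y : ι → E} (hG : (kernelMatrix K y).PosSemidef) (hσ2 : 0 < σ2) {S : Set E}
    (hS : ∀ u ∈ S, ∀ v ∈ S, |K u v - lam| ≤ η) {s : Finset ι} (hs : s.Nonempty)
    (hsS : ∀ i ∈ s, y i ∈ S) {q : E} (hq : q ∈ S) :
    posteriorVariance K lam σ2 y q ≤ 3 * η + σ2 / s.card := by
  have hss : ∀ i ∈ s, ∀ j ∈ s, K (y i) (y j) ≤ lam + η := fun i hi j hj => by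
    linarith [(abs_le.1 (hS _ (hsS i hi) _ (hsS j hj))).2]
  have hsq : ∀ i ∈ s, lam - η ≤ K (y i) q := fun i hi => by
    linarith [(abs_le.1 (hS _ (hsS i hi) q hq)).1]
  set G := kernelMatrix K y
  set k : ι → ℝ := fun i => K (y i) q
  set c : ℝ := (s.card : ℝ)⁻¹
  set a : ι → ℝ := fun i => if i ∈ s then c else 0
  have hcard : ∀ x : ℝ, c * (s.card * x) = x := fun x => by
    rw [← mul_assoc, inv_mul_cancel₀ (by exact_mod_cast hs.card_pos.ne'), one_mul]
  have hak : lam - η ≤ a ⬝ᵥ k := by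
    rw [ite_mem_dotProduct, ← hcard (lam - η)]
    gcongr
    exact (nsmul_eq_mul _ _).symm.trans_le (Finset.card_nsmul_le_sum s k _ hsq)
  have haGa : a ⬝ᵥ (G *ᵥ a) ≤ lam + η := by
    have hrow : ∀ i ∈ s, (G *ᵥ a) i ≤ lam + η := fun i hi => by
      rw [mulVec, dotProduct_comm, ite_mem_dotProduct, ← hcard (lam + η)]
      gcongr
      exact (Finset.sum_le_card_nsmul s _ _ (hss i hi)).trans_eq (nsmul_eq_mul _ _)
    rw [ite_mem_dotProduct, ← hcard (lam + η)]
    gcongr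
    exact (Finset.sum_le_card_nsmul s _ _ hrow).trans_eq (nsmul_eq_mul _ _)
  have haa : a ⬝ᵥ a = c := by
    rw [ite_mem_dotProduct, Finset.sum_congr rfl fun i hi => if_pos hi, Finset.sum_const,
      nsmul_eq_mul, hcard]
  have hM : (G + σ2 • 1).PosDef := PosDef.posSemidef_add hG (.smul .one hσ2)
  have := two_mul_dotProduct_sub_le_dotProduct_inv_mulVec hM k a
  rw [add_mulVec, smul_mulVec, one_mulVec, dotProduct_add, dotProduct_smul, haa,
    smul_eq_mul] at this
  rw [posteriorVariance, div_eq_mul_inv]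
  linarith

end PosteriorVariance

theorem IsCompact.exists_forall_ball_inter_abs_sub_le {X : Type*} [PseudoMetricSpace X]
    {D : Set X} (hD : IsCompact D) {K : X → X → ℝ} (hK : Continuous fun p : X × X => K p.1 p.2)
    {lam : ℝ} (hKdiag : ∀ q ∈ D, K q q = lam) {η : ℝ} (hη : 0 < η) :
    ∃ r > 0, ∀ c, ∀ u ∈ ball c r ∩ D, ∀ v ∈ ball c r ∩ D, |K u v - lam| ≤ η := by
  obtain ⟨r, hr, hKr⟩ := Metric.uniformContinuousOn_iff_le.1
    ((hD.prod hD).uniformContinuousOn_of_continuous hK.continuousOn) η hη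
  refine ⟨r / 2, by positivity, fun c u ⟨hu, huD⟩ v ⟨hv, hvD⟩ => ?_⟩
  have huv : dist u v ≤ r :=
    (dist_triangle_right u v c).trans (by linarith [mem_ball.1 hu, mem_ball.1 hv])
  have := hKr (u, v) ⟨huD, hvD⟩ (u, u) ⟨huD, huD⟩ (by simpa [Prod.dist_eq, dist_comm] using huv)
  rwa [Real.dist_eq, hKdiag u huD] at this

theorem Convex.measureReal_ball_inter_pos {E : Type*} [NormedAddCommGroup E] [NormedSpace ℝ E]
    [MeasurableSpace E] (μ : Measure E) [μ.IsOpenPosMeasure] [IsFiniteMeasureOnCompacts μ]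
    {D : Set E} (hD : Convex ℝ D) (hDc : IsCompact D) (hDint : (interior D).Nonempty) {c : E}
    (hc : c ∈ closure D) {ρ : ℝ} (hρ : 0 < ρ) : 0 < μ.real (ball c ρ ∩ D) := by
  rw [← hD.closure_interior_eq_closure_of_nonempty_interior hDint, Metric.mem_closure_iff] at hc
  obtain ⟨b, hb, hcb⟩ := hc ρ hρ
  refine ENNReal.toReal_pos ?_ (measure_mono Set.inter_subset_right |>.trans_lt
    hDc.measure_lt_top).ne
  refine (((isOpen_ball.inter isOpen_interior).measure_pos μ ⟨b, mem_ball'.2 hcb, hb⟩).trans_le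
    ?_).ne'
  exact measure_mono (Set.inter_subset_inter_right _ interior_subset)

theorem exists_finset_card_eq_of_forall_exists_lt {t m n : ℕ} (ht : m * n ≤ t) {Q : ℕ → Prop}
    (h : ∀ b < m, ∃ l < n, Q (b * n + l)) : ∃ s : Finset (Fin t), s.card = m ∧ ∀ i ∈ s, Q i := by
  choose! l hl hQ using h
  have hlt : ∀ b < m, b * n + l b < (b + 1) * n := fun b hb => by nlinarith [hl b hb]
  set g : Fin m → Fin t := fun b => ⟨b * n + l b, (hlt b b.2).trans_le
    ((Nat.mul_le_mul_right n b.2).trans ht)⟩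
  have hg : StrictMono g := fun b b' hbb' => by
    show b * n + l b < b' * n + l b'
    nlinarith [hlt b b.2, Nat.mul_le_mul_right n (hbb' : b.1 + 1 ≤ b')]
  refine ⟨Finset.univ.map ⟨g, hg.injective⟩, by simp, fun i hi => ?_⟩
  obtain ⟨b, -, rfl⟩ := Finset.mem_map.1 hi
  exact hQ b b.2

section Hitting

variable {Ω : Type*} {mΩ : MeasurableSpace Ω} {P : Measure Ω}

theorem mul_measureReal_le_measureReal_inter_of_le_condExp [IsFiniteMeasure P]
    {m : MeasurableSpace Ω} (hm : m ≤ mΩ) {S E : Set Ω} (hS : MeasurableSet[m] S)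
    (hE : MeasurableSet[mΩ] E) {p : ℝ}
    (hp : ∀ᵐ ω ∂P, p ≤ P[E.indicator (fun _ => (1 : ℝ)) | m] ω) :
    p * P.real S ≤ P.real (S ∩ E) := by
  calc p * P.real S = ∫ _ in S, p ∂P := by rw [setIntegral_const, smul_eq_mul, mul_comm]
    _ ≤ ∫ ω in S, P[E.indicator (fun _ => (1 : ℝ)) | m] ω ∂P :=
      setIntegral_mono_ae integrableOn_const integrable_condExp.integrableOn hp
    _ = ∫ ω in S, E.indicator (fun _ => (1 : ℝ)) ω ∂P :=
      setIntegral_condExp hm ((integrable_const 1).indicator hE) hS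
    _ = P.real (S ∩ E) := by
      rw [setIntegral_indicator hE, setIntegral_const, smul_eq_mul, mul_one]

variable [IsProbabilityMeasure P] {ℱ : Filtration ℕ mΩ}

theorem measureReal_forall_notMem_le {E : ℕ → Set Ω} (hE : ∀ k, MeasurableSet[ℱ k] (E k))
    {p : ℝ} (hp1 : p ≤ 1)
    (hp : ∀ k, ∀ᵐ ω ∂P, p ≤ P[(E (k + 1)).indicator (fun _ => (1 : ℝ)) | ℱ k] ω) (s n : ℕ) :
    P.real {ω | ∀ l < n, ω ∉ E (s + l + 1)} ≤ (1 - p) ^ n := by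
  induction n with
  | zero => simp
  | succ n ih =>
    set S := {ω | ∀ l < n, ω ∉ E (s + l + 1)}
    have hS : MeasurableSet[ℱ (s + n)] S := by
      simp only [S, Set.ofPred_forall]
      exact .iInter fun l => .iInter fun hl => (ℱ.mono (by omega) _ (hE _)).compl
    have hsplit : {ω | ∀ l < n + 1, ω ∉ E (s + l + 1)} = S \ E (s + n + 1) := by
      ext ω
      simp only [S, Set.mem_ofPred_eq, Set.mem_sdiff, Nat.lt_succ_iff_lt_or_eq, or_imp,
        forall_and, forall_eq]
    have hmeas : MeasurableSet (E (s + n + 1)) := ℱ.le _ _ (hE _)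
    have hhit := mul_measureReal_le_measureReal_inter_of_le_condExp (ℱ.le (s + n)) hS hmeas
      (hp (s + n))
    have := measureReal_inter_add_sdiff (μ := P) (s := S) hmeas
    rw [hsplit, pow_succ]
    nlinarith [measureReal_nonneg (μ := P) (s := S)]

theorem measureReal_exists_forall_notMem_le {ι : Type*} (C : Finset ι) {E : ι → ℕ → Set Ω}
    (hE : ∀ c k, MeasurableSet[ℱ k] (E c k)) {p : ι → ℝ} (hp1 : ∀ c ∈ C, p c ≤ 1)
    (hp : ∀ c ∈ C, ∀ k, ∀ᵐ ω ∂P, p c ≤ P[(E c (k + 1)).indicator (fun _ => (1 : ℝ)) | ℱ k] ω)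
    (m n : ℕ) :
    P.real {ω | ∃ c ∈ C, ∃ b < m, ∀ l < n, ω ∉ E c (b * n + l + 1)} ≤
      ∑ c ∈ C, m * (1 - p c) ^ n := by
  have hcover : {ω | ∃ c ∈ C, ∃ b < m, ∀ l < n, ω ∉ E c (b * n + l + 1)} =
      ⋃ c ∈ C, ⋃ b ∈ Finset.range m, {ω | ∀ l < n, ω ∉ E c (b * n + l + 1)} := by
    ext; simp
  rw [hcover]
  calc _ ≤ ∑ c ∈ C, P.real (⋃ b ∈ Finset.range m, {ω | ∀ l < n, ω ∉ E c (b * n + l + 1)}) :=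
        measureReal_biUnion_finset_le _ _
    _ ≤ ∑ c ∈ C, ∑ b ∈ Finset.range m, P.real {ω | ∀ l < n, ω ∉ E c (b * n + l + 1)} :=
        Finset.sum_le_sum fun c _ => measureReal_biUnion_finset_le _ _
    _ ≤ ∑ c ∈ C, ∑ b ∈ Finset.range m, (1 - p c) ^ n :=
        Finset.sum_le_sum fun c hc => Finset.sum_le_sum fun b _ =>
          measureReal_forall_notMem_le (hE c) (hp1 c hc) (hp c hc) (b * n) n
    _ = ∑ c ∈ C, m * (1 - p c) ^ n := by simp

theorem one_sub_ofReal_le_measure_compl {s : Set Ω} {δ : ℝ}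
    (hs : P.real s ≤ δ) : 1 - ENNReal.ofReal δ ≤ P sᶜ :=
  calc 1 - ENNReal.ofReal δ ≤ 1 - P s := by
        gcongr
        rw [← ofReal_measureReal]
        exact ENNReal.ofReal_le_ofReal hs
    _ ≤ P sᶜ := by
        rw [tsub_le_iff_left, ← measure_univ (μ := P)]
        exact measure_univ_le_add_compl s

end Hitting

theorem stmt_5_general {Ω : Type*} [mΩ : MeasurableSpace Ω]
    (P : Measure Ω) [IsProbabilityMeasure P]
    (D : Set E2) (hDc : IsCompact D) (hDconv : Convex ℝ D) (hDint : (interior D).Nonempty)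
    (K : E2 → E2 → ℝ)
    (hKcont : Continuous fun p : E2 × E2 => K p.1 p.2)
    (hKsymm : ∀ a b, K a b = K b a)
    (hKpsd : ∀ (n : ℕ) (v : Fin n → E2) (a : Fin n → ℝ),
      0 ≤ ∑ i, ∑ j, a i * a j * K (v i) (v j))
    (lam : ℝ) (hKdiag : ∀ q ∈ D, K q q = lam)
    (ℱ : Filtration ℕ mΩ) (x : ℕ → Ω → E2)
    (hadapted : ∀ k, Measurable[ℱ k] (x k))
    (εbar : ℝ) (hεbar : 0 < εbar)
    (htrans : ∀ (k : ℕ) (A : Set E2), MeasurableSet A → A ⊆ D →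
      ∀ᵐ ω ∂P, εbar * (volume A).toReal ≤
        (P[(x (k + 1) ⁻¹' A).indicator (fun _ => (1 : ℝ)) | ℱ k]) ω)
    (σ2 : ℝ) (hσ2 : 0 < σ2) :
    ∀ ε : ℝ, 0 < ε → ∀ δ : ℝ, 0 < δ → δ ≤ 1 →
      ∃ t₀ : ℕ, ∀ t ≥ t₀,
        1 - ENNReal.ofReal δ ≤
          P {ω | ∀ q ∈ D,
            lam - (fun i : Fin t => K (x (i.1 + 1) ω) q) ⬝ᵥ
              (((Matrix.of fun i j : Fin t => K (x (i.1 + 1) ω) (x (j.1 + 1) ω)) +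
                  σ2 • (1 : Matrix (Fin t) (Fin t) ℝ))⁻¹ *ᵥ
                fun i : Fin t => K (x (i.1 + 1) ω) q) ≤ ε} := by
  intro ε hε δ hδ _
  obtain ⟨r, hr, hKA⟩ := hDc.exists_forall_ball_inter_abs_sub_le hKcont hKdiag (η := ε / 6)
    (by positivity)
  set A : E2 → Set E2 := fun c => ball c r ∩ D
  have hA : ∀ c, MeasurableSet (A c) := fun c => measurableSet_ball.inter hDc.measurableSet
  obtain ⟨C, hCD, hDC⟩ := hDc.elim_nhds_subcover (ball · r) fun c _ => ball_mem_nhds c hr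
  set p : E2 → ℝ := fun c => min 1 (εbar * volume.real (A c))
  have hp : ∀ c ∈ C, 0 < p c := fun c hc => lt_min one_pos <| mul_pos hεbar <|
    hDconv.measureReal_ball_inter_pos volume hDc hDint (subset_closure (hCD c hc)) hr
  obtain ⟨m, hσm, hm⟩ := (((tendsto_const_div_atTop_nhds_zero_nat σ2).eventually
    (gt_mem_nhds (half_pos hε))).and (eventually_gt_atTop 0)).exists
  obtain ⟨n, hn⟩ : ∃ n : ℕ, ∑ c ∈ C, m * (1 - p c) ^ n ≤ δ :=
    ((tendsto_finsetSum C fun c hc => (tendsto_pow_atTop_nhds_zero_of_lt_one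
      (by simp [p]) (by linarith [hp c hc])).const_mul (m : ℝ)).eventually
        (ge_mem_nhds (by simpa using hδ))).exists
  refine ⟨m * n, fun t ht => ?_⟩
  have hbad := measureReal_exists_forall_notMem_le C (fun c k => hadapted k (hA c))
    (fun c _ => min_le_left _ _) (fun c _ k => (htrans k _ (hA c) Set.inter_subset_right).mono
      fun ω => (min_le_right _ _).trans) m n
  refine (one_sub_ofReal_le_measure_compl (hbad.trans hn)).trans (measure_mono fun ω hω q hq => ?_)
  simp only [Set.mem_compl_iff, Set.mem_ofPred_eq, not_exists, not_and, not_forall, not_not,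
    exists_prop] at hω
  obtain ⟨c, hc, hqc⟩ := Set.mem_iUnion₂.1 (hDC hq)
  obtain ⟨s, hs, hsA⟩ := exists_finset_card_eq_of_forall_exists_lt ht
    (Q := fun i => x (i + 1) ω ∈ A c) (hω c hc)
  calc posteriorVariance K lam σ2 (fun i : Fin t => x (i.1 + 1) ω) q
      ≤ 3 * (ε / 6) + σ2 / s.card := posteriorVariance_le (posSemidef_kernelMatrix hKsymm hKpsd _)
        hσ2 (hKA c) (Finset.card_pos.1 (hs ▸ hm)) hsA ⟨hqc, hq⟩
    _ ≤ ε := by rw [hs]; linarith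

/-- For a continuous, symmetric, positive semidefinite kernel `K` with constant
diagonal `λ > 0` on a compact convex set `D ⊆ ℝ²` with nonempty interior, and an adapted
`D`-valued process whose one-step conditional transition probabilities dominate `ε̄·vol`,
the Gaussian-process posterior variance `V_t(x) = λ - k_t(x)ᵀ(K̄_t + σ²·I)⁻¹ k_t(x)` becomes
uniformly small with high probability: for every `ε > 0` and `δ ∈ (0,1]` there is `t₀` such
that for every `t ≥ t₀`, `P(sup_{x ∈ D} V_t(x) ≤ ε) ≥ 1 - δ`. -/
theorem stmt_5 {Ω : Type*} [mΩ : MeasurableSpace Ω]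
    (P : Measure Ω) [IsProbabilityMeasure P]
    (D : Set E2) (hDc : IsCompact D) (hDconv : Convex ℝ D) (hDint : (interior D).Nonempty)
    (K : E2 → E2 → ℝ)
    (hKcont : Continuous fun p : E2 × E2 => K p.1 p.2)
    (hKsymm : ∀ a b, K a b = K b a)
    (hKpsd : ∀ (n : ℕ) (v : Fin n → E2) (a : Fin n → ℝ),
      0 ≤ ∑ i, ∑ j, a i * a j * K (v i) (v j))
    (lam : ℝ) (hlam : 0 < lam) (hKdiag : ∀ q ∈ D, K q q = lam)
    (ℱ : Filtration ℕ mΩ) (x : ℕ → Ω → E2)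
    (hadapted : ∀ k, Measurable[ℱ k] (x k))
    (hinD : ∀ k ω, x k ω ∈ D)
    (εbar : ℝ) (hεbar : 0 < εbar)
    (htrans : ∀ (k : ℕ) (A : Set E2), MeasurableSet A → A ⊆ D →
      ∀ᵐ ω ∂P, εbar * (volume A).toReal ≤
        (P[(x (k + 1) ⁻¹' A).indicator (fun _ => (1 : ℝ)) | ℱ k]) ω)
    (σ2 : ℝ) (hσ2 : 0 < σ2) :
    ∀ ε : ℝ, 0 < ε → ∀ δ : ℝ, 0 < δ → δ ≤ 1 →
      ∃ t₀ : ℕ, ∀ t ≥ t₀,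
        1 - ENNReal.ofReal δ ≤
          P {ω | ∀ q ∈ D,
            lam - (fun i : Fin t => K (x (i.1 + 1) ω) q) ⬝ᵥ
              (((Matrix.of fun i j : Fin t => K (x (i.1 + 1) ω) (x (j.1 + 1) ω)) +
                  σ2 • (1 : Matrix (Fin t) (Fin t) ℝ))⁻¹ *ᵥ
                fun i : Fin t => K (x (i.1 + 1) ω) q) ≤ ε} :=
  stmt_5_general (mΩ := mΩ) P D hDc hDconv hDint K hKcont hKsymm hKpsd lam hKdiag ℱ x hadapted εbar
    hεbar htrans σ2 hσ2
end

section
/- Let X ⊂ ℝ² be a compact convex polygonal region and let μ : X → ℝ be a continuous strictly positive density. Let x = (x_1, …, x_N) ∈ Xᴺ be a tuple of distinct points, let V_i(x) = {q ∈ X : ‖q − x_i‖ ≤ ‖q − x_j‖ for all j} be the Voronoi cells, let c_i(V_i(x)) = (∫_{V_i(x)} μ(q) dq)⁻¹ ∫_{V_i(x)} q μ(q) dq be the centroids, and define the coverage function H(x; μ) = Σ_{i=1}^{N} ∫_{V_i(x)} ‖q − c_i(V_i(x))‖² μ(q) dq. If the Lloyd update x′ = (c_1(V_1(x)), …, c_N(V_N(x)))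 also consists of distinct points, then H(x′; μ) ≤ H(x; μ). -/
/-!
Write `x' = c(V(x))`. Since the centroid of a cell minimises the second moment of the cell
(parallel axis theorem), `H(x')` is at most `∑ᵢ ∫_{Vᵢ(x')} ‖q - x'ᵢ‖² μ`. On the Voronoi cell
`Vᵢ(x')` the distance `‖q - x'ᵢ‖` is the distance from `q` to the set `{x'ⱼ}`, and the cells of
distinct generators overlap only in bisectors, which are null; so this sum is
`∫_D dist(q, {x'ⱼ})² μ`. Splitting the same integral along the cells of `x` and bounding
`dist(q, {x'ⱼ}) ≤ ‖q - x'ᵢ‖` on `Vᵢ(x)` gives at most `∑ᵢ ∫_{Vᵢ(x)} ‖q - x'ᵢ‖² μ = H(x)`.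
-/

open MeasureTheory

open Metric Set Function

variable {E : Type*} [NormedAddCommGroup E]

noncomputable def massCenter [NormedSpace ℝ E] [MeasurableSpace E] (ν : Measure E)
    (μ : E → ℝ) : E :=
  (∫ q, μ q ∂ν)⁻¹ • ∫ q, μ q • q ∂ν

section MassCenter

variable [InnerProductSpace ℝ E] [MeasurableSpace E] {ν : Measure E} {μ : E → ℝ}

theorem integral_norm_sub_sq_mul_eq [CompleteSpace E] (hμ : Integrable μ ν)
    (hμq : Integrable (fun q => μ q • q) ν) {c : E}
    (hc : Integrable (fun q => ‖q - c‖ ^ 2 * μ q) ν)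
    (hbc : ∫ q, μ q • q ∂ν = (∫ q, μ q ∂ν) • c) (p : E) :
    ∫ q, ‖q - p‖ ^ 2 * μ q ∂ν
      = ∫ q, ‖q - c‖ ^ 2 * μ q ∂ν + (∫ q, μ q ∂ν) * ‖c - p‖ ^ 2 := by
  set v := c - p
  have hpointwise : ∀ q : E, ‖q - p‖ ^ 2 * μ q
      = ‖q - c‖ ^ 2 * μ q + (2 * inner ℝ v (μ q • q) + (‖v‖ ^ 2 - 2 * inner ℝ v c) * μ q) := by
    intro q
    have hq : q - p = (q - c) + v := by simp [v]
    rw [hq, norm_add_sq_real, real_inner_smul_right, inner_sub_left, real_inner_comm v q,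
      real_inner_comm v c]
    ring
  have hinner : Integrable (fun q => inner ℝ v (μ q • q)) ν := hμq.const_inner v
  have hlinear : Integrable
      (fun q => 2 * inner ℝ v (μ q • q) + (‖v‖ ^ 2 - 2 * inner ℝ v c) * μ q) ν :=
    (hinner.const_mul 2).add (hμ.const_mul _)
  rw [integral_congr_ae (.of_forall hpointwise), integral_add hc hlinear,
    integral_add (hinner.const_mul 2) (hμ.const_mul _), integral_const_mul, integral_const_mul,
    integral_inner hμq, hbc, real_inner_smul_right]
  ring

theorem integral_smul_eq_smul_massCenter (hμ0 : 0 ≤ᵐ[ν] μ) (hμ : Integrable μ ν) :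
    ∫ q, μ q • q ∂ν = (∫ q, μ q ∂ν) • massCenter ν μ := by
  by_cases hm : ∫ q, μ q ∂ν = 0
  · -- `massCenter ν μ = 0` is a junk value here, but `μ = 0` a.e. makes both sides vanish.
    have hzero : μ =ᵐ[ν] 0 := (integral_eq_zero_iff_of_nonneg_ae hμ0 hμ).1 hm
    rw [hm, zero_smul, integral_congr_ae (g := 0) (hzero.mono fun q hq => by simp [hq])]
    simp
  · rw [massCenter, smul_smul, mul_inv_cancel₀ hm, one_smul]

theorem integral_norm_sub_massCenter_sq_mul_le [CompleteSpace E] (hμ0 : 0 ≤ᵐ[ν] μ)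
    (hμ : Integrable μ ν) (hμq : Integrable (fun q => μ q • q) ν)
    (hc : Integrable (fun q => ‖q - massCenter ν μ‖ ^ 2 * μ q) ν) (p : E) :
    ∫ q, ‖q - massCenter ν μ‖ ^ 2 * μ q ∂ν ≤ ∫ q, ‖q - p‖ ^ 2 * μ q ∂ν := by
  rw [integral_norm_sub_sq_mul_eq hμ hμq hc (integral_smul_eq_smul_massCenter hμ0 hμ) p]
  have hm : 0 ≤ ∫ q, μ q ∂ν := integral_nonneg_of_ae hμ0
  have : 0 ≤ (∫ q, μ q ∂ν) * ‖massCenter ν μ - p‖ ^ 2 := by positivity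
  linarith

theorem setIntegral_norm_sub_massCenter_sq_mul_le [CompleteSpace E] [OpensMeasurableSpace E]
    {ρ : Measure E} [IsFiniteMeasureOnCompacts ρ] {S : Set E} (hS : IsCompact S) (hμ : ContinuousOn μ S)
    (hμ0 : ∀ q ∈ S, 0 ≤ μ q) (p : E) :
    ∫ q in S, ‖q - massCenter (ρ.restrict S) μ‖ ^ 2 * μ q ∂ρ ≤ ∫ q in S, ‖q - p‖ ^ 2 * μ q ∂ρ :=
  integral_norm_sub_massCenter_sq_mul_le
    ((ae_restrict_iff' hS.measurableSet).2 (.of_forall hμ0)) (hμ.integrableOn_compact hS)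
    ((hμ.smul continuousOn_id).integrableOn_compact hS)
    ((by fun_prop : ContinuousOn (fun q => ‖q - massCenter (ρ.restrict S) μ‖ ^ 2) S).mul hμ
      |>.integrableOn_compact hS) p

end MassCenter

section Voronoi

variable {ι : Type*}

def voronoiCell (D : Set E) (z : ι → E) (i : ι) : Set E :=
  {q ∈ D | ∀ j, ‖q - z i‖ ≤ ‖q - z j‖}

variable {D : Set E} {z : ι → E} {i : ι}

theorem voronoiCell_subset : voronoiCell D z i ⊆ D := fun _ hq => hq.1

theorem voronoiCell_eq_inter :
    voronoiCell D z i = D ∩ ⋂ j, {q | ‖q - z i‖ ≤ ‖q - z j‖} := by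
  ext q
  simp [voronoiCell]

theorem isClosed_iInter_setOf_norm_sub_le (z : ι → E) (i : ι) :
    IsClosed (⋂ j, {q | ‖q - z i‖ ≤ ‖q - z j‖}) :=
  isClosed_iInter fun _ => isClosed_le (by fun_prop) (by fun_prop)

theorem isClosed_voronoiCell (hD : IsClosed D) : IsClosed (voronoiCell D z i) := by
  rw [voronoiCell_eq_inter]
  exact hD.inter (isClosed_iInter_setOf_norm_sub_le z i)

theorem measurableSet_voronoiCell [MeasurableSpace E] [OpensMeasurableSpace E]
    (hD : MeasurableSet D) : MeasurableSet (voronoiCell D z i) := by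
  rw [voronoiCell_eq_inter]
  exact hD.inter (isClosed_iInter_setOf_norm_sub_le z i).measurableSet

theorem isCompact_voronoiCell (hD : IsCompact D) : IsCompact (voronoiCell D z i) :=
  hD.of_isClosed_subset (isClosed_voronoiCell hD.isClosed) voronoiCell_subset

theorem iUnion_voronoiCell [Finite ι] [Nonempty ι] : ⋃ i, voronoiCell D z i = D := by
  refine (iUnion_subset fun i => voronoiCell_subset).antisymm fun q hq => ?_
  obtain ⟨i, hi⟩ := Finite.exists_min fun j => ‖q - z j‖
  exact mem_iUnion.2 ⟨i, hq, hi⟩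

theorem voronoiCell_inter_subset_perpBisector [InnerProductSpace ℝ E] (i j : ι) :
    voronoiCell D z i ∩ voronoiCell D z j ⊆ AffineSubspace.perpBisector (z i) (z j) :=
  fun q hq => AffineSubspace.mem_perpBisector_iff_dist_eq.2 <| by
    rw [dist_eq_norm, dist_eq_norm]
    exact (hq.1.2 j).antisymm (hq.2.2 i)

theorem infDist_range_le_norm_sub (z : ι → E) (i : ι) (q : E) :
    infDist q (range z) ≤ ‖q - z i‖ :=
  dist_eq_norm q (z i) ▸ infDist_le_dist_of_mem (mem_range_self i)

theorem infDist_range_eq_of_mem_voronoiCell {q : E} (hq : q ∈ voronoiCell D z i) :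
    infDist q (range z) = ‖q - z i‖ :=
  (infDist_range_le_norm_sub z i q).antisymm <|
    (le_infDist ⟨z i, mem_range_self i⟩).2 <| forall_mem_range.2 fun j => by
      rw [dist_eq_norm]
      exact hq.2 j

variable [InnerProductSpace ℝ E] [FiniteDimensional ℝ E] [MeasurableSpace E] [BorelSpace E]
  {ρ : Measure E} [ρ.IsAddHaarMeasure]

theorem measure_voronoiCell_inter_eq_zero (hz : Injective z) {i j : ι} (hij : i ≠ j) :
    ρ (voronoiCell D z i ∩ voronoiCell D z j) = 0 :=
  measure_mono_null (voronoiCell_inter_subset_perpBisector i j) <|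
    Measure.addHaar_affineSubspace ρ _ fun h =>
      hij (hz (AffineSubspace.perpBisector_eq_top.1 h))

theorem sum_setIntegral_voronoiCell [Fintype ι] [Nonempty ι] (hD : MeasurableSet D)
    (hz : Injective z) {f : E → ℝ} (hf : IntegrableOn f D ρ) :
    ∑ i, ∫ q in voronoiCell D z i, f q ∂ρ = ∫ q in D, f q ∂ρ := by
  conv_rhs => rw [← iUnion_voronoiCell (D := D) (z := z)]
  rw [integral_iUnion_ae (fun i => (measurableSet_voronoiCell hD).nullMeasurableSet)
    (fun i j hij => measure_voronoiCell_inter_eq_zero hz hij)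
    (iUnion_voronoiCell (z := z) ▸ hf), tsum_fintype]

theorem sum_setIntegral_voronoiCell_le [Fintype ι] [Nonempty ι] (hD : IsCompact D)
    {μ : E → ℝ} (hμ : ContinuousOn μ D) (hμ0 : ∀ q ∈ D, 0 ≤ μ q)
    {x y : ι → E} (hx : Injective x) (hy : Injective y) :
    ∑ i, ∫ q in voronoiCell D y i, ‖q - y i‖ ^ 2 * μ q ∂ρ
      ≤ ∑ i, ∫ q in voronoiCell D x i, ‖q - y i‖ ^ 2 * μ q ∂ρ := by
  set d : E → ℝ := fun q => infDist q (range y) ^ 2 * μ q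
  have hd : IntegrableOn d D ρ :=
    ((continuous_infDist_pt _).pow 2).continuousOn.mul hμ |>.integrableOn_compact hD
  have hcell : ∀ (z : ι → E) i, MeasurableSet (voronoiCell D z i) := fun _ _ =>
    measurableSet_voronoiCell hD.measurableSet
  calc ∑ i, ∫ q in voronoiCell D y i, ‖q - y i‖ ^ 2 * μ q ∂ρ
      = ∑ i, ∫ q in voronoiCell D y i, d q ∂ρ :=
        Finset.sum_congr rfl fun i _ => setIntegral_congr_fun (hcell y i) fun q hq => by
          simp only [d, infDist_range_eq_of_mem_voronoiCell hq]
    _ = ∑ i, ∫ q in voronoiCell D x i, d q ∂ρ := by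
        rw [sum_setIntegral_voronoiCell hD.measurableSet hy hd,
          sum_setIntegral_voronoiCell hD.measurableSet hx hd]
    _ ≤ ∑ i, ∫ q in voronoiCell D x i, ‖q - y i‖ ^ 2 * μ q ∂ρ :=
        Finset.sum_le_sum fun i _ => setIntegral_mono_on (hd.mono_set voronoiCell_subset)
          ((by fun_prop : ContinuousOn (fun q => ‖q - y i‖ ^ 2) D).mul hμ
            |>.integrableOn_compact hD |>.mono_set voronoiCell_subset)
          (hcell x i) fun q hq => mul_le_mul_of_nonneg_right
            (pow_le_pow_left₀ infDist_nonneg (infDist_range_le_norm_sub y i q) 2)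
            (hμ0 q (voronoiCell_subset hq))

end Voronoi

theorem stmt_10_general (D : Set E2) (hDc : IsCompact D)
    (μ : E2 → ℝ) (hμcont : ContinuousOn μ D) (hμpos : ∀ q ∈ D, 0 < μ q)
    (N : ℕ) (hN : 0 < N)
    (V : (Fin N → E2) → Fin N → Set E2)
    (hV : ∀ z i, V z i = {q ∈ D | ∀ j, ‖q - z i‖ ≤ ‖q - z j‖})
    (c : (Fin N → E2) → Fin N → E2)
    (hc : ∀ z i, c z i = (∫ q in V z i, μ q)⁻¹ • ∫ q in V z i, μ q • q)
    (Hcov : (Fin N → E2) → ℝ)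
    (hHcov : ∀ z, Hcov z = ∑ i, ∫ q in V z i, ‖q - c z i‖ ^ 2 * μ q)
    (x : Fin N → E2) (hxinj : Function.Injective x)
    (hLloydinj : Function.Injective (c x)) :
    Hcov (c x) ≤ Hcov x := by
  obtain rfl : V = voronoiCell D := funext fun z => funext (hV z)
  have : Nonempty (Fin N) := ⟨⟨0, hN⟩⟩
  have hμ0 : ∀ q ∈ D, 0 ≤ μ q := fun q hq => (hμpos q hq).le
  rw [hHcov, hHcov]
  calc ∑ i, ∫ q in voronoiCell D (c x) i, ‖q - c (c x) i‖ ^ 2 * μ q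
      ≤ ∑ i, ∫ q in voronoiCell D (c x) i, ‖q - c x i‖ ^ 2 * μ q :=
        Finset.sum_le_sum fun i _ => hc (c x) i ▸ setIntegral_norm_sub_massCenter_sq_mul_le
          (isCompact_voronoiCell hDc) (hμcont.mono voronoiCell_subset)
          (fun q hq => hμ0 q (voronoiCell_subset hq)) _
    _ ≤ ∑ i, ∫ q in voronoiCell D x i, ‖q - c x i‖ ^ 2 * μ q :=
        sum_setIntegral_voronoiCell_le hDc hμcont hμ0 hxinj hLloydinj

/-- One step of Lloyd's "centering and partitioning" iteration does not increase
the coverage cost: for a compact convex (polygonal) region `D ⊆ ℝ²` with nonempty interior,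
a continuous strictly positive density `μ` on `D`, distinct generators `x`, Voronoi cells
`V_i(z)`, centroids `c_i(V_i(z))` and coverage cost
`H(z) = Σ_i ∫_{V_i(z)} ‖q − c_i(V_i(z))‖² μ(q) dq`, if the Lloyd update
`x′ = (c_1(V_1(x)), …, c_N(V_N(x)))` also consists of distinct points then `H(x′) ≤ H(x)`. -/
theorem stmt_10 (D : Set E2) (hDc : IsCompact D) (hDconv : Convex ℝ D)
    (hDint : (interior D).Nonempty)
    (μ : E2 → ℝ) (hμcont : ContinuousOn μ D) (hμpos : ∀ q ∈ D, 0 < μ q)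
    (N : ℕ) (hN : 0 < N)
    (V : (Fin N → E2) → Fin N → Set E2)
    (hV : ∀ z i, V z i = {q ∈ D | ∀ j, ‖q - z i‖ ≤ ‖q - z j‖})
    (c : (Fin N → E2) → Fin N → E2)
    (hc : ∀ z i, c z i = (∫ q in V z i, μ q)⁻¹ • ∫ q in V z i, μ q • q)
    (Hcov : (Fin N → E2) → ℝ)
    (hHcov : ∀ z, Hcov z = ∑ i, ∫ q in V z i, ‖q - c z i‖ ^ 2 * μ q)
    (x : Fin N → E2) (hxD : ∀ i, x i ∈ D) (hxinj : Function.Injective x)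
    (hLloydinj : Function.Injective (c x)) :
    Hcov (c x) ≤ Hcov x :=
  stmt_10_general D hDc μ hμcont hμpos N hN V hV c hc Hcov hHcov x hxinj hLloydinj
end
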